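/- arXiv:2310.18605 — 2 statements merged into one kernel-verified Lean document; each statement's English description precedes it below -/
import Mathlib

section
/- Let f(z, θ) be continuously differentiable and z*(θ) satisfy z*(θ) = f(z*(θ), θ) with I − ∂f/∂z invertible at (z*(θ), θ). Then for a differentiable loss L(z), the gradient satisfies dL(z*(θ))/dθ = (∂L/∂z)·(I − ∂f/∂z)⁻¹·(∂f/∂θ), all evaluated at the fixed point. -/
theorem ift_gradient_deq
    (n p : ℕ)
    (f : EuclideanSpace ℝ (Fin n) → EuclideanSpace ℝ (Fin p) → EuclideanSpace ℝ (Fin n))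
    (hf : ContDiff ℝ 1 (fun q : EuclideanSpace ℝ (Fin n) × EuclideanSpace ℝ (Fin p) => f q.1 q.2))
    (zstar : EuclideanSpace ℝ (Fin p) → EuclideanSpace ℝ (Fin n))
    (hfix : ∀ θ, zstar θ = f (zstar θ) θ)
    (θ0 : EuclideanSpace ℝ (Fin p))
    (hzdiff : DifferentiableAt ℝ zstar θ0)
    (L : EuclideanSpace ℝ (Fin n) → ℝ)
    (hL : DifferentiableAt ℝ L (zstar θ0))
    (hinv : IsUnit ((1 : EuclideanSpace ℝ (Fin n) →L[ℝ] EuclideanSpace ℝ (Fin n))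
              - fderiv ℝ (fun z => f z θ0) (zstar θ0))) :
    fderiv ℝ (fun θ => L (zstar θ)) θ0 =
      ((fderiv ℝ L (zstar θ0)).comp
        (Ring.inverse ((1 : EuclideanSpace ℝ (Fin n) →L[ℝ] EuclideanSpace ℝ (Fin n))
          - fderiv ℝ (fun z => f z θ0) (zstar θ0)))).comp
        (fderiv ℝ (fun θ => f (zstar θ0) θ) θ0) := by
  let E := EuclideanSpace ℝ (Fin n)
  let P := EuclideanSpace ℝ (Fin p)
  have hFdiff : DifferentiableAt ℝ (fun q : E × P => f q.1 q.2) (zstar θ0, θ0) :=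
    (hf.differentiable one_ne_zero).differentiableAt
  have hFd := hFdiff.hasFDerivAt
  set Df := fderiv ℝ (fun q : E × P => f q.1 q.2) (zstar θ0, θ0) with hDf
  -- derivative in z
  have hA : HasFDerivAt (fun z : E => f z θ0)
      (Df.comp (ContinuousLinearMap.inl ℝ E P)) (zstar θ0) := by
    have := hFd.comp (zstar θ0)
      ((HasFDerivAt.prodMk (hasFDerivAt_id (𝕜 := ℝ) (zstar θ0)) (hasFDerivAt_const θ0 (zstar θ0))) :
        HasFDerivAt (fun z : E => (z, θ0)) _ (zstar θ0))
    exact this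
  -- derivative in θ
  have hB : HasFDerivAt (fun θ : P => f (zstar θ0) θ)
      (Df.comp (ContinuousLinearMap.inr ℝ E P)) θ0 := by
    have hinner : HasFDerivAt (fun θ : P => ((zstar θ0, θ) : E × P))
        ((0 : P →L[ℝ] E).prod (ContinuousLinearMap.id ℝ P)) θ0 :=
      HasFDerivAt.prodMk (hasFDerivAt_const (zstar θ0) θ0) (hasFDerivAt_id θ0)
    have := hFd.comp θ0 hinner
    exact this
  set A := Df.comp (ContinuousLinearMap.inl ℝ E P) with hAdef
  set B := Df.comp (ContinuousLinearMap.inr ℝ E P) with hBdef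
  set Z := fderiv ℝ zstar θ0 with hZ
  -- derivative of zstar via fixed point equation
  have hzst : HasFDerivAt zstar (Df.comp (Z.prod (ContinuousLinearMap.id ℝ P))) θ0 := by
    have hinner : HasFDerivAt (fun θ : P => ((zstar θ, θ) : E × P))
        (Z.prod (ContinuousLinearMap.id ℝ P)) θ0 :=
      HasFDerivAt.prodMk hzdiff.hasFDerivAt (hasFDerivAt_id θ0)
    have h1 := HasFDerivAt.comp (f := fun θ : P => ((zstar θ, θ) : E × P)) θ0 hFd hinner
    have h2 : ((fun q : E × P => f q.1 q.2) ∘ fun θ : P => ((zstar θ, θ) : E × P)) = zstar := by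
      funext θ; exact (hfix θ).symm
    rwa [h2] at h1
  have hZeq : ∀ v, Z v = A (Z v) + B v := by
    intro v
    have h1 : Z = Df.comp (Z.prod (ContinuousLinearMap.id ℝ P)) := hZ.trans hzst.fderiv
    conv_lhs => rw [h1]
    show Df (Z v, v) = A (Z v) + B v
    have hv : ((Z v, v) : E × P) = (Z v, 0) + (0, v) := by simp
    rw [hv, map_add]
    rfl
  have hU : ((1 : E →L[ℝ] E) - fderiv ℝ (fun z => f z θ0) (zstar θ0)) = 1 - A := by
    rw [hA.fderiv]
  rw [hU] at hinv ⊢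
  have hc : ((1 : E →L[ℝ] E) - A).comp Z = B := by
    refine ContinuousLinearMap.ext fun v => ?_
    simp only [ContinuousLinearMap.comp_apply, ContinuousLinearMap.sub_apply,
      ContinuousLinearMap.one_apply]
    rw [sub_eq_iff_eq_add']
    exact hZeq v
  have hsolve : Z = (Ring.inverse (1 - A)).comp B := by
    calc Z = ((Ring.inverse (1 - A)) * (1 - A)).comp Z := by
            rw [Ring.inverse_mul_cancel _ hinv, ContinuousLinearMap.one_def,
              ContinuousLinearMap.id_comp]
      _ = (Ring.inverse (1 - A)).comp (((1 : E →L[ℝ] E) - A).comp Z) := by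
            rw [ContinuousLinearMap.mul_def, ContinuousLinearMap.comp_assoc]
      _ = (Ring.inverse (1 - A)).comp B := by rw [hc]
  have hchain : fderiv ℝ (fun θ => L (zstar θ)) θ0 = (fderiv ℝ L (zstar θ0)).comp Z :=
    fderiv_comp θ0 hL hzdiff
  rw [hchain, hsolve, hB.fderiv, ← ContinuousLinearMap.comp_assoc]
end

section
/- Let A be an n×n matrix and W a d×d matrix with Perron-Frobenius condition ρ(|A ⊗ W|) < 1, where |·| is entrywise absolute value and ⊗ the Kronecker product, and let φ be 1-Lipschitz componentwise (|φ(a) − φ(b)| ≤ |a − b| entrywise). Then the equation Z = φ(A Z W + U) has a unique solution Z for any U, and the iteration Z^{k+1} = φ(A Z^k W + U) converges to it. -/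
open Matrix Filter
open scoped ENNReal NNReal

section Aux
attribute [local instance] Matrix.linftyOpNormedAddCommGroup Matrix.linftyOpNormedRing Matrix.linftyOpNormedAlgebra

lemma entry_norm_le_linfty {N : Type*} [Fintype N] (X : Matrix N N ℂ) (i j : N) :
    ‖X i j‖ ≤ ‖X‖ := by
  have h : ‖X i j‖₊ ≤ ‖X‖₊ := by
    rw [Matrix.linfty_opNNNorm_def]
    exact le_trans
      (Finset.single_le_sum (f := fun j => ‖X i j‖₊) (fun _ _ => zero_le) (Finset.mem_univ j))
      (Finset.le_sup (f := fun i => ∑ j, ‖X i j‖₊) (Finset.mem_univ i))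
  exact_mod_cast h

lemma pow_entry_bound {N : Type*} [Fintype N] [DecidableEq N] [Nonempty N]
    (B : Matrix N N ℝ)
    (h : ∀ μ ∈ spectrum ℂ (B.map Complex.ofReal), ‖μ‖ < 1) :
    ∃ C r : ℝ, 0 ≤ C ∧ 0 ≤ r ∧ r < 1 ∧ ∀ (k : ℕ) (i j : N), |(B ^ k) i j| ≤ C * r ^ k := by
  haveI : CompleteSpace (Matrix N N ℂ) := FiniteDimensional.complete ℂ _
  set M : Matrix N N ℂ := B.map Complex.ofReal with hMdef
  have hMpow : ∀ k : ℕ, M ^ k = (B ^ k).map Complex.ofReal := by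
    intro k
    have := map_pow (Complex.ofRealHom.mapMatrix : Matrix N N ℝ →+* Matrix N N ℂ) B k
    exact this.symm
  have hsr : spectralRadius ℂ M < 1 := by
    have := spectrum.spectralRadius_lt_of_forall_lt (a := M) (r := 1) (fun z hz => by
      rw [← NNReal.coe_lt_coe]
      simpa using h z hz)
    simpa using this
  obtain ⟨x, hx1, hx2⟩ := exists_between hsr
  lift x to NNReal using ne_top_of_lt hx2
  set r : ℝ := max (x : ℝ) (1/2) with hrdef
  have hr0 : (0:ℝ) < r := lt_of_lt_of_le (by norm_num) (le_max_right _ _)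
  have hr1 : r < 1 := by
    apply max_lt _ (by norm_num)
    have : (x : ℝ≥0∞) < 1 := hx2
    exact_mod_cast this
  have hgel := spectrum.pow_nnnorm_pow_one_div_tendsto_nhds_spectralRadius M
  have hev : ∀ᶠ k : ℕ in atTop,
      (‖M ^ k‖₊ : ENNReal) ^ (1/(k:ℝ)) < (x : ENNReal) := hgel.eventually_lt_const hx1
  obtain ⟨K, hK⟩ := eventually_atTop.mp hev
  have hpow : ∀ k : ℕ, K + 1 ≤ k → ‖M ^ k‖ ≤ r ^ k := by
    intro k hk
    have hk1 : 1 ≤ k := le_trans (Nat.le_add_left 1 K) hk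
    have hk0 : (k:ℝ) ≠ 0 := by positivity
    have h1 := hK k (le_trans (Nat.le_succ K) hk)
    have h2 := ENNReal.rpow_lt_rpow h1 (by positivity : (0:ℝ) < (k:ℝ))
    rw [← ENNReal.rpow_mul, one_div, inv_mul_cancel₀ hk0, ENNReal.rpow_one] at h2
    rw [ENNReal.rpow_natCast, ← ENNReal.coe_pow, ENNReal.coe_lt_coe] at h2
    have h3 : ‖M ^ k‖ ≤ (x:ℝ) ^ k := by
      have := h2.le
      exact_mod_cast this
    exact le_trans h3 (pow_le_pow_left₀ (x.coe_nonneg) (le_max_left _ _) k)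
  set C : ℝ := (∑ k ∈ Finset.range (K+1), ‖M ^ k‖ / r ^ k) + 1 with hCdef
  have hsum0 : 0 ≤ ∑ k ∈ Finset.range (K+1), ‖M ^ k‖ / r ^ k :=
    Finset.sum_nonneg fun k _ => div_nonneg (norm_nonneg _) (by positivity)
  have hC1 : 1 ≤ C := le_add_of_nonneg_left hsum0
  refine ⟨C, r, le_trans zero_le_one hC1, hr0.le, hr1, ?_⟩
  intro k i j
  have hentry : |(B ^ k) i j| ≤ ‖M ^ k‖ := by
    rw [hMpow k]
    have := entry_norm_le_linfty ((B ^ k).map Complex.ofReal) i j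
    rwa [Matrix.map_apply, Complex.norm_real, Real.norm_eq_abs] at this
  refine hentry.trans ?_
  rcases le_or_gt k K with hkK | hkK
  · have h1 : ‖M ^ k‖ / r ^ k ≤ C := by
      refine le_trans ?_ (le_add_of_nonneg_right zero_le_one)
      exact Finset.single_le_sum (f := fun k => ‖M ^ k‖ / r ^ k)
        (fun t _ => div_nonneg (norm_nonneg _) (by positivity))
        (Finset.mem_range.mpr (Nat.lt_succ_of_le hkK))
    calc ‖M ^ k‖ = (‖M ^ k‖ / r ^ k) * r ^ k := by field_simp
    _ ≤ C * r ^ k := mul_le_mul_of_nonneg_right h1 (by positivity)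
  · exact le_trans (hpow k hkK) (by nlinarith [pow_pos hr0 k])

end Aux

theorem ignn_well_posedness
    (n d : ℕ) (A : Matrix (Fin n) (Fin n) ℝ) (W : Matrix (Fin d) (Fin d) ℝ)
    (φ : ℝ → ℝ) (hφ : ∀ a b, |φ a - φ b| ≤ |a - b|)
    (hpf : ∀ μ ∈ spectrum ℂ
        (((A.kronecker W).map (fun x => |x|)).map Complex.ofReal), ‖μ‖ < 1) :
    ∀ U : Matrix (Fin n) (Fin d) ℝ,
      ∃ Zs : Matrix (Fin n) (Fin d) ℝ,
        (A * Zs * W + U).map φ = Zs ∧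
        (∀ Z, (A * Z * W + U).map φ = Z → Z = Zs) ∧
        ∀ Z0 : Matrix (Fin n) (Fin d) ℝ,
          Filter.Tendsto (fun k => (fun Z => (A * Z * W + U).map φ)^[k] Z0)
            Filter.atTop (nhds Zs) := by
  intro U
  set F : Matrix (Fin n) (Fin d) ℝ → Matrix (Fin n) (Fin d) ℝ :=
    fun Z => (A * Z * W + U).map φ with hFdef
  by_cases hne : Nonempty (Fin n × Fin d)
  swap
  · haveI : Subsingleton (Matrix (Fin n) (Fin d) ℝ) :=
      ⟨fun a b => by ext i j; exact absurd ⟨i, j⟩ hne⟩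
    refine ⟨F 0, Subsingleton.elim _ _, fun Z _ => Subsingleton.elim _ _, fun Z0 => ?_⟩
    exact tendsto_const_nhds.congr fun k => Subsingleton.elim _ _
  · set Aa : Matrix (Fin n) (Fin n) ℝ := A.map (fun x => |x|) with hAadef
    set Wa : Matrix (Fin d) (Fin d) ℝ := W.map (fun x => |x|) with hWadef
    have hAapos : ∀ (k : ℕ) (p q : Fin n), 0 ≤ (Aa ^ k) p q := by
      intro k
      induction k with
      | zero => intro p q; rw [pow_zero, Matrix.one_apply]; split <;> norm_num
      | succ k ih =>
        intro p q
        rw [pow_succ, Matrix.mul_apply]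
        exact Finset.sum_nonneg fun c _ => mul_nonneg (ih p c) (abs_nonneg _)
    have hWapos : ∀ (k : ℕ) (p q : Fin d), 0 ≤ (Wa ^ k) p q := by
      intro k
      induction k with
      | zero => intro p q; rw [pow_zero, Matrix.one_apply]; split <;> norm_num
      | succ k ih =>
        intro p q
        rw [pow_succ, Matrix.mul_apply]
        exact Finset.sum_nonneg fun c _ => mul_nonneg (ih p c) (abs_nonneg _)
    have hB0 : (A.kronecker W).map (fun x => |x|) = Aa.kronecker Wa := by
      ext ⟨i, q⟩ ⟨p, j⟩
      simp [Matrix.map_apply, abs_mul, hAadef, hWadef]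
    have hBk : ∀ k : ℕ, ((A.kronecker W).map (fun x => |x|)) ^ k
        = (Aa ^ k).kronecker (Wa ^ k) := by
      intro k
      rw [hB0]
      simp only [Matrix.kronecker]
      induction k with
      | zero => rw [pow_zero, pow_zero, pow_zero, Matrix.one_kronecker_one]
      | succ k ih => rw [pow_succ, pow_succ, pow_succ, ih, Matrix.mul_kronecker_mul]
    obtain ⟨C, r, hC0, hr0, hr1, hCr⟩ :=
      pow_entry_bound ((A.kronecker W).map (fun x => |x|)) hpf
    have hprod : ∀ (k : ℕ) (i p : Fin n) (q j : Fin d),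
        (Aa ^ k) i p * (Wa ^ k) q j ≤ C * r ^ k := by
      intro k i p q j
      have h1 := hCr k (i, q) (p, j)
      rw [hBk k] at h1
      simp only [Matrix.kronecker, Matrix.kroneckerMap_apply] at h1
      calc (Aa ^ k) i p * (Wa ^ k) q j
          ≤ |(Aa ^ k) i p * (Wa ^ k) q j| := le_abs_self _
      _ ≤ C * r ^ k := h1
    -- triple product entry formula
    have triple : ∀ (P : Matrix (Fin n) (Fin n) ℝ) (D : Matrix (Fin n) (Fin d) ℝ)
        (Q : Matrix (Fin d) (Fin d) ℝ) (i : Fin n) (j : Fin d),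
        (P * D * Q) i j = ∑ p, ∑ q, P i p * D p q * Q q j := by
      intro P D Q i j
      simp only [Matrix.mul_apply, Finset.sum_mul]
      rw [Finset.sum_comm]
    -- key iterate bound, in matrix form
    have key : ∀ (k : ℕ) (Z Z' : Matrix (Fin n) (Fin d) ℝ) (i : Fin n) (j : Fin d),
        |F^[k] Z i j - F^[k] Z' i j| ≤
          ((Aa ^ k) * (Matrix.of fun p q => |Z p q - Z' p q|) * (Wa ^ k)) i j := by
      intro k
      induction k with
      | zero =>
        intro Z Z' i j
        simp [pow_zero]
      | succ k ih =>
        intro Z Z' i j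
        rw [Function.iterate_succ_apply', Function.iterate_succ_apply']
        set X := F^[k] Z with hX
        set X' := F^[k] Z' with hX'
        set D : Matrix (Fin n) (Fin d) ℝ := Matrix.of fun p q => |Z p q - Z' p q| with hD
        set E : Matrix (Fin n) (Fin d) ℝ := Matrix.of fun p q => |X p q - X' p q| with hE
        have step1 : |F X i j - F X' i j| ≤ (Aa * E * Wa) i j := by
          rw [triple]
          have e : ∀ Y : Matrix (Fin n) (Fin d) ℝ,
              F Y i j = φ ((A * Y * W) i j + U i j) := by
            intro Y; simp [hFdef, Matrix.map_apply, Matrix.add_apply]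
          rw [e, e]
          refine (hφ _ _).trans ?_
          have e2 : (A * X * W) i j + U i j - ((A * X' * W) i j + U i j)
              = ∑ q, ∑ p, A i p * (X p q - X' p q) * W q j := by
            rw [add_sub_add_right_eq_sub]
            simp only [Matrix.mul_apply]
            rw [← Finset.sum_sub_distrib]
            refine Finset.sum_congr rfl fun q _ => ?_
            rw [← sub_mul, ← Finset.sum_sub_distrib, Finset.sum_mul]
            refine Finset.sum_congr rfl fun p _ => by ring
          rw [e2]
          refine le_trans ?_ (le_of_eq Finset.sum_comm)
          refine (Finset.abs_sum_le_sum_abs _ _).trans ?_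
          refine Finset.sum_le_sum fun q _ => ?_
          refine (Finset.abs_sum_le_sum_abs _ _).trans ?_
          refine Finset.sum_le_sum fun p _ => ?_
          have : |A i p * (X p q - X' p q) * W q j|
              = Aa i p * E p q * Wa q j := by
            simp only [hE, Matrix.of_apply, hAadef, hWadef, Matrix.map_apply]
            rw [abs_mul, abs_mul]
          exact this.le
        have step2 : (Aa * E * Wa) i j ≤ (Aa * ((Aa ^ k) * D * (Wa ^ k)) * Wa) i j := by
          rw [triple, triple]
          refine Finset.sum_le_sum fun p _ => Finset.sum_le_sum fun q _ => ?_
          have h1 : 0 ≤ Aa i p := by simp [hAadef, Matrix.map_apply]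
          have h2 : 0 ≤ Wa q j := by simp [hWadef, Matrix.map_apply]
          exact mul_le_mul_of_nonneg_right
            (mul_le_mul_of_nonneg_left (ih Z Z' p q) h1) h2
        have step3 : Aa * ((Aa ^ k) * D * (Wa ^ k)) * Wa
            = (Aa ^ (k+1)) * D * (Wa ^ (k+1)) := by
          rw [pow_succ' Aa k, pow_succ Wa k]
          simp only [Matrix.mul_assoc]
        calc |F X i j - F X' i j| ≤ (Aa * E * Wa) i j := step1
        _ ≤ (Aa * ((Aa ^ k) * D * (Wa ^ k)) * Wa) i j := step2
        _ = ((Aa ^ (k+1)) * D * (Wa ^ (k+1))) i j := by rw [step3]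
    -- scalar bound
    have bound2 : ∀ (k : ℕ) (Z Z' : Matrix (Fin n) (Fin d) ℝ) (i : Fin n) (j : Fin d),
        |F^[k] Z i j - F^[k] Z' i j| ≤
          (C * ∑ p, ∑ q, |Z p q - Z' p q|) * r ^ k := by
      intro k Z Z' i j
      refine (key k Z Z' i j).trans ?_
      rw [triple]
      have h1 : ∀ (p : Fin n) (q : Fin d),
          (Aa ^ k) i p * (Matrix.of fun p q => |Z p q - Z' p q|) p q * (Wa ^ k) q j
            ≤ (C * r ^ k) * |Z p q - Z' p q| := by
        intro p q
        have e : (Aa ^ k) i p * (Matrix.of fun p q => |Z p q - Z' p q|) p q * (Wa ^ k) q j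
            = ((Aa ^ k) i p * (Wa ^ k) q j) * |Z p q - Z' p q| := by
          simp only [Matrix.of_apply]; ring
        rw [e]
        exact mul_le_mul_of_nonneg_right (hprod k i p q j) (abs_nonneg _)
      refine (Finset.sum_le_sum fun p _ => Finset.sum_le_sum fun q _ => h1 p q).trans ?_
      refine le_of_eq ?_
      simp only [← Finset.mul_sum]
      ring
    -- Cauchy sequence for Z0 = 0, entrywise
    have hconv0 : ∀ (i : Fin n) (j : Fin d),
        ∃ L : ℝ, Tendsto (fun k => F^[k] 0 i j) atTop (nhds L) := by
      intro i j
      have hc : CauchySeq (fun k => F^[k] 0 i j) := by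
        refine cauchySeq_of_le_geometric r (C * ∑ p, ∑ q, |(0:Matrix (Fin n) (Fin d) ℝ) p q - F 0 p q|) hr1 ?_
        intro k
        rw [Real.dist_eq, Function.iterate_succ_apply]
        exact bound2 k 0 (F 0) i j
      exact cauchySeq_tendsto_of_complete hc
    choose Zs hZs using hconv0
    have hZsM : ∀ (Z0 : Matrix (Fin n) (Fin d) ℝ),
        Tendsto (fun k => F^[k] Z0) atTop (nhds (Matrix.of Zs)) := by
      intro Z0
      refine tendsto_pi_nhds.mpr ?_
      intro i
      rw [tendsto_pi_nhds]
      intro j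
      have hd : Tendsto (fun k => dist (F^[k] Z0 i j) (F^[k] 0 i j)) atTop (nhds 0) := by
        have hb : ∀ k, dist (F^[k] Z0 i j) (F^[k] 0 i j)
            ≤ (C * ∑ p, ∑ q, |Z0 p q - (0:Matrix (Fin n) (Fin d) ℝ) p q|) * r ^ k := by
          intro k; rw [Real.dist_eq]; exact bound2 k Z0 0 i j
        have hg : Tendsto (fun k : ℕ =>
            (C * ∑ p, ∑ q, |Z0 p q - (0:Matrix (Fin n) (Fin d) ℝ) p q|) * r ^ k) atTop (nhds 0) := by
          rw [show (0:ℝ) = (C * ∑ p, ∑ q, |Z0 p q - (0:Matrix (Fin n) (Fin d) ℝ) p q|) * 0 by ring]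
          exact (tendsto_pow_atTop_nhds_zero_of_lt_one hr0 hr1).const_mul _
        exact squeeze_zero (fun k => dist_nonneg) hb hg
      refine (hZs i j).congr_dist ?_
      simpa [dist_comm] using hd
    haveI hT2 : T2Space (Matrix (Fin n) (Fin d) ℝ) := by
      show T2Space (Fin n → Fin d → ℝ); infer_instance
    have hφc : Continuous φ := by
      refine LipschitzWith.continuous (K := 1) (LipschitzWith.of_dist_le_mul fun a b => ?_)
      simpa [Real.dist_eq] using hφ a b
    have hFcont : Continuous F := by
      have h1 : Continuous fun Z : Matrix (Fin n) (Fin d) ℝ => A * Z * W + U :=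
        (((continuous_const.matrix_mul continuous_id).matrix_mul continuous_const).add
          continuous_const)
      exact h1.matrix_map hφc
    have hfix : F (Matrix.of Zs) = Matrix.of Zs := by
      have h1 : Tendsto (fun k => F^[k+1] 0) atTop (nhds (Matrix.of Zs)) :=
        (hZsM 0).comp (tendsto_add_atTop_nat 1)
      have h2 : Tendsto (fun k => F (F^[k] 0)) atTop (nhds (F (Matrix.of Zs))) :=
        (hFcont.tendsto _).comp (hZsM 0)
      have h3 : (fun k => F (F^[k] 0)) = fun k => F^[k+1] 0 :=
        funext fun k => (Function.iterate_succ_apply' F k 0).symm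
      rw [h3] at h2
      exact tendsto_nhds_unique h2 h1
    refine ⟨Matrix.of Zs, hfix, ?_, hZsM⟩
    intro Z hZ
    have hZfix : ∀ k, F^[k] Z = Z := fun k => Function.iterate_fixed (f := F) (x := Z) hZ k
    have h4 : Tendsto (fun k => F^[k] Z) atTop (nhds Z) :=
      tendsto_const_nhds.congr fun k => (hZfix k).symm
    exact tendsto_nhds_unique h4 (hZsM Z)
end
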